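/- Let ξ₀, η₀ ∈ ℂ, r₀ ∈ ℝ, and let (z₀,t₀) = P(ξ₀,η₀,r₀). Then for every ξ ∈ ℂ one has (1/2)(z₀ − 2t₀ξ − z̄₀ξ²) = ((1 + ξ̄₀ξ)²η₀ − (ξ₀ − ξ)²η̄₀ + (ξ₀ − ξ)(1 + ξ̄₀ξ)(1 + ξ₀ξ̄₀)r₀)/(1 + ξ₀ξ̄₀)². In other words, the twistor coordinate of any oriented line of direction ξ passing through the point P(ξ₀,η₀,r₀) is given by this expression. -/

import Mathlib

/-! The height `t₀` of `twistorPoint ξ₀ η₀ r₀` is the real part of a complex number which is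
already real, being fixed by conjugation; so `t₀` may be replaced by that number, and the claim
becomes an identity of rational functions in `ξ₀, ξ̄₀, η₀, η̄₀, ξ` whose common denominator
`(1 + ξ₀ξ̄₀)²` is nonzero. -/

open ComplexConjugate

/-- The point of `ℝ³ = ℂ × ℝ` on the oriented line with twistor data `(ξ, η)`
at signed distance `r` from the point of the line closest to the origin. -/
noncomputable def twistorPoint (ξ η : ℂ) (r : ℝ) : ℂ × ℝ :=
  ((2 * (η - conj η * ξ ^ 2) + 2 * ξ * (1 + ξ * conj ξ) * (r : ℂ)) / (1 + ξ * conj ξ) ^ 2,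
   (((-2 * (η * conj ξ + conj η * ξ) + (1 - ξ ^ 2 * (conj ξ) ^ 2) * (r : ℂ)) /
      (1 + ξ * conj ξ) ^ 2).re))

noncomputable def twistorCoordinate (z : ℂ) (t : ℝ) (ξ : ℂ) : ℂ :=
  (1 / 2) * (z - 2 * (t : ℂ) * ξ - conj z * ξ ^ 2)

lemma one_add_mul_conj_ne_zero (ξ : ℂ) : 1 + ξ * conj ξ ≠ 0 := by
  rw [Complex.mul_conj]
  exact_mod_cast (add_pos_of_pos_of_nonneg one_pos (Complex.normSq_nonneg ξ)).ne'

lemma one_add_conj_mul_ne_zero (ξ : ℂ) : 1 + conj ξ * ξ ≠ 0 := by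
  rw [mul_comm]
  exact one_add_mul_conj_ne_zero ξ

lemma ofReal_twistorPoint_snd (ξ η : ℂ) (r : ℝ) :
    ((twistorPoint ξ η r).2 : ℂ) =
      (-2 * (η * conj ξ + conj η * ξ) + (1 - ξ ^ 2 * (conj ξ) ^ 2) * (r : ℂ)) /
        (1 + ξ * conj ξ) ^ 2 := by
  have := one_add_mul_conj_ne_zero ξ
  have := one_add_conj_mul_ne_zero ξ
  rw [twistorPoint, Complex.conj_eq_iff_re.mp]
  simp only [map_div₀, map_add, map_mul, map_sub, map_pow, map_one, map_neg, map_ofNat,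
    Complex.conj_conj, Complex.conj_ofReal]
  field_simp
  ring

lemma twistorCoordinate_twistorPoint (ξ₀ η₀ : ℂ) (r₀ : ℝ) (ξ : ℂ) :
    twistorCoordinate (twistorPoint ξ₀ η₀ r₀).1 (twistorPoint ξ₀ η₀ r₀).2 ξ =
      ((1 + conj ξ₀ * ξ) ^ 2 * η₀ - (ξ₀ - ξ) ^ 2 * conj η₀ +
          (ξ₀ - ξ) * (1 + conj ξ₀ * ξ) * (1 + ξ₀ * conj ξ₀) * (r₀ : ℂ)) /
        (1 + ξ₀ * conj ξ₀) ^ 2 := by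
  have := one_add_mul_conj_ne_zero ξ₀
  have := one_add_conj_mul_ne_zero ξ₀
  rw [twistorCoordinate, ofReal_twistorPoint_snd, twistorPoint]
  simp only [map_div₀, map_add, map_mul, map_sub, map_pow, map_one, map_ofNat,
    Complex.conj_conj, Complex.conj_ofReal]
  field_simp
  ring

/-- the twistor coordinate `½(z₀ − 2t₀ξ − z̄₀ξ²)` of any oriented line of
direction `ξ` through the point `(z₀, t₀) = twistorPoint ξ₀ η₀ r₀` is
`((1 + ξ̄₀ξ)²η₀ − (ξ₀ − ξ)²η̄₀ + (ξ₀ − ξ)(1 + ξ̄₀ξ)(1 + ξ₀ξ̄₀)r₀)/(1 + ξ₀ξ̄₀)²`. -/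
theorem twistor_coordinate_through_point (ξ₀ η₀ : ℂ) (r₀ : ℝ) (z₀ : ℂ) (t₀ : ℝ)
    (h : (z₀, t₀) = twistorPoint ξ₀ η₀ r₀) :
    ∀ ξ : ℂ,
      (1 / 2) * (z₀ - 2 * (t₀ : ℂ) * ξ - conj z₀ * ξ ^ 2) =
        ((1 + conj ξ₀ * ξ) ^ 2 * η₀ - (ξ₀ - ξ) ^ 2 * conj η₀ +
            (ξ₀ - ξ) * (1 + conj ξ₀ * ξ) * (1 + ξ₀ * conj ξ₀) * (r₀ : ℂ)) /
          (1 + ξ₀ * conj ξ₀) ^ 2 := by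
  intro ξ
  obtain ⟨rfl, rfl⟩ := Prod.ext_iff.mp h
  exact twistorCoordinate_twistorPoint ξ₀ η₀ r₀ ξ
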